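/- Let A ∈ SL₂(ℤ), P ∈ GL₂(ℝ) and s ≠ 0 with P·A·P⁻¹ = diag(e^{s}, e^{−s}). Then the set Γ = {(P·(p,q), s·r) : p,q,r ∈ ℤ} is a subgroup of Sol which is discrete (as a subset of ℝ³) and cocompact: the quotient space Sol/Γ of left cosets is compact. In particular Γ is a lattice in Sol. -/

import Mathlib

noncomputable section

/-- The group `Sol`: underlying set `ℝ³` with multiplication
`(x₁,y₁,z₁)·(x₂,y₂,z₂) = (x₁ + e^{z₁}x₂, y₁ + e^{−z₁}y₂, z₁ + z₂)`. -/
def Sol : Type := ℝ × ℝ × ℝ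

namespace Sol

instance : TopologicalSpace Sol := inferInstanceAs (TopologicalSpace (ℝ × ℝ × ℝ))

/-- Build an element of `Sol` from coordinates. -/
def mk (x y z : ℝ) : Sol := ((x, y, z) : ℝ × ℝ × ℝ)

/-- First coordinate. -/
def X (g : Sol) : ℝ := (show ℝ × ℝ × ℝ from g).1
/-- Second coordinate. -/
def Y (g : Sol) : ℝ := (show ℝ × ℝ × ℝ from g).2.1
/-- Third coordinate. -/
def Z (g : Sol) : ℝ := (show ℝ × ℝ × ℝ from g).2.2

theorem ext {a b : Sol} (h1 : X a = X b) (h2 : Y a = Y b) (h3 : Z a = Z b) : a = b :=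
  show (show ℝ × ℝ × ℝ from a) = (show ℝ × ℝ × ℝ from b) from
    Prod.ext h1 (Prod.ext h2 h3)

instance : One Sol := ⟨mk 0 0 0⟩
instance : Mul Sol :=
  ⟨fun a b => mk (X a + Real.exp (Z a) * X b) (Y a + Real.exp (-Z a) * Y b) (Z a + Z b)⟩
instance : Inv Sol :=
  ⟨fun a => mk (-(Real.exp (-Z a) * X a)) (-(Real.exp (Z a) * Y a)) (-Z a)⟩

@[simp] theorem X_mk (x y z : ℝ) : X (mk x y z) = x := rfl
@[simp] theorem Y_mk (x y z : ℝ) : Y (mk x y z) = y := rfl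
@[simp] theorem Z_mk (x y z : ℝ) : Z (mk x y z) = z := rfl

@[simp] theorem X_one : X (1 : Sol) = 0 := rfl
@[simp] theorem Y_one : Y (1 : Sol) = 0 := rfl
@[simp] theorem Z_one : Z (1 : Sol) = 0 := rfl

@[simp] theorem X_mul (a b : Sol) : X (a * b) = X a + Real.exp (Z a) * X b := rfl
@[simp] theorem Y_mul (a b : Sol) : Y (a * b) = Y a + Real.exp (-Z a) * Y b := rfl
@[simp] theorem Z_mul (a b : Sol) : Z (a * b) = Z a + Z b := rfl

@[simp] theorem X_inv (a : Sol) : X a⁻¹ = -(Real.exp (-Z a) * X a) := rfl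
@[simp] theorem Y_inv (a : Sol) : Y a⁻¹ = -(Real.exp (Z a) * Y a) := rfl
@[simp] theorem Z_inv (a : Sol) : Z a⁻¹ = -Z a := rfl

instance : Group Sol :=
  Group.ofLeftAxioms
    (fun a b c => ext
      (by simp [Real.exp_add]; ring)
      (by simp [Real.exp_add, neg_add]; ring)
      (by simp; ring))
    (fun a => ext (by simp) (by simp) (by simp))
    (fun a => ext (by simp) (by simp) (by simp))

/-- A (continuous) one-parameter subgroup of `Sol`: a continuous group homomorphism
from `(ℝ,+)` to `Sol`. -/
def IsOneParam (σ : ℝ → Sol) : Prop :=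
  Continuous σ ∧ ∀ s t : ℝ, σ (s + t) = σ s * σ t

/-- A pair of points `m₁ m₂` of the homogeneous space `Sol ⧸ Γ` is blockable if some finite
set `B` avoiding `m₁, m₂` meets every connecting curve `t ↦ σ(t)•m₁`, `t ∈ [0,1]`, where
`σ` is a one-parameter subgroup with `σ(1)•m₁ = m₂`. -/
def Blockable (Γ : Subgroup Sol) (m₁ m₂ : Sol ⧸ Γ) : Prop :=
  ∃ B : Finset (Sol ⧸ Γ), m₁ ∉ B ∧ m₂ ∉ B ∧
    ∀ σ : ℝ → Sol, IsOneParam σ → σ 1 • m₁ = m₂ →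
      ∃ t ∈ Set.Icc (0 : ℝ) 1, σ t • m₁ ∈ B

end Sol

/-- The embedding `(p,q,r) ↦ (P·(p,q), s·r)` of `ℤ² ⋊ ℤ` into `Sol`. -/
noncomputable def solEmbed (P : Matrix (Fin 2) (Fin 2) ℝ) (s : ℝ) (p q r : ℤ) : Sol :=
  Sol.mk (P.mulVec ![(p : ℝ), (q : ℝ)] 0) (P.mulVec ![(p : ℝ), (q : ℝ)] 1) (s * r)

/-! The subgroup `Γ` is a semidirect product `N ⋊ ⟨t⟩` of the horizontal lattice
`N = {(P·u, 0) : u ∈ ℤ²}` and the cyclic group generated by `t = (0, 0, s)`. Conjugation by `t`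
acts on horizontal elements through `diag(e^s, e^{-s}) = P A P⁻¹`, which maps `P·ℤ²` onto itself
because `A` and `A⁻¹` are integral; so `t` normalizes `N` and `N·⟨t⟩ = Γ` is a subgroup.
It is discrete as the image of `ℤ³` under the linear isomorphism `(a, b, c) ↦ (P·(a, b), s·c)` of
`ℝ³`. It is cocompact because every `g = (x, y, z)` is `(0, 0, s·c)·(P·v, 0)·γ` with `γ ∈ Γ`,
`c ∈ [0, 1]` the fractional part of `z / s` and `v ∈ [0, 1]²` the fractional part of
`P⁻¹·(e^{-sc} x, e^{sc} y)`. -/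

open Matrix
open scoped Pointwise

namespace Sol

@[fun_prop]
theorem continuous_X : Continuous X := continuous_fst

@[fun_prop]
theorem continuous_Y : Continuous Y := continuous_snd.fst

@[fun_prop]
theorem continuous_Z : Continuous Z := continuous_snd.snd

theorem continuous_mk {α : Type*} [TopologicalSpace α] {f g h : α → ℝ} (hf : Continuous f)
    (hg : Continuous g) (hh : Continuous h) : Continuous fun a => mk (f a) (g a) (h a) :=
  hf.prodMk (hg.prodMk hh)

def horizontal (w : Fin 2 → ℝ) : Sol := mk (w 0) (w 1) 0

def vertical (z : ℝ) : Sol := mk 0 0 z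

theorem horizontal_zero : horizontal 0 = 1 :=
  ext (by simp [horizontal]) (by simp [horizontal]) (by simp [horizontal])

theorem horizontal_add (v w : Fin 2 → ℝ) : horizontal (v + w) = horizontal v * horizontal w :=
  ext (by simp [horizontal]) (by simp [horizontal]) (by simp [horizontal])

theorem vertical_add (a b : ℝ) : vertical (a + b) = vertical a * vertical b :=
  ext (by simp [vertical]) (by simp [vertical]) (by simp [vertical])

theorem vertical_zpow (z : ℝ) (k : ℤ) : vertical z ^ k = vertical (k * z) := by
  induction k using Int.induction_on with
  | zero => exact ext (by simp [vertical]) (by simp [vertical]) (by simp [vertical])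
  | succ k ih => rw [_root_.zpow_add_one, ih, ← vertical_add]; push_cast; ring_nf
  | pred k ih =>
    rw [_root_.zpow_sub_one, ih, mul_inv_eq_iff_eq_mul, ← vertical_add]; push_cast; ring_nf

theorem horizontal_mul_vertical (w : Fin 2 → ℝ) (z : ℝ) :
    horizontal w * vertical z = mk (w 0) (w 1) z :=
  ext (by simp [horizontal, vertical]) (by simp [horizontal, vertical])
    (by simp [horizontal, vertical])

theorem vertical_mul_horizontal_eq_mk (z : ℝ) (w : Fin 2 → ℝ) :
    vertical z * horizontal w = mk (Real.exp z * w 0) (Real.exp (-z) * w 1) z :=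
  ext (by simp [horizontal, vertical]) (by simp [horizontal, vertical])
    (by simp [horizontal, vertical])

theorem vertical_mul_horizontal (z : ℝ) (w : Fin 2 → ℝ) :
    vertical z * horizontal w =
      horizontal (diagonal ![Real.exp z, Real.exp (-z)] *ᵥ w) * vertical z := by
  rw [vertical_mul_horizontal_eq_mk, horizontal_mul_vertical]
  simp [mulVec_diagonal]

theorem mk_mul_vertical (x y z b : ℝ) : mk x y z * vertical b = mk x y (z + b) :=
  ext (by simp [vertical]) (by simp [vertical]) (by simp [vertical])

def horizontalSubgroup (Λ : AddSubgroup (Fin 2 → ℝ)) : Subgroup Sol where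
  carrier := horizontal '' Λ
  mul_mem' := by
    rintro _ _ ⟨v, hv, rfl⟩ ⟨w, hw, rfl⟩
    exact ⟨v + w, add_mem hv hw, horizontal_add v w⟩
  one_mem' := ⟨0, zero_mem Λ, horizontal_zero⟩
  inv_mem' := by
    rintro _ ⟨w, hw, rfl⟩
    refine ⟨-w, neg_mem hw, (inv_eq_of_mul_eq_one_right ?_).symm⟩
    rw [← horizontal_add, add_neg_cancel, horizontal_zero]

theorem vertical_mem_normalizer_horizontalSubgroup {Λ : AddSubgroup (Fin 2 → ℝ)} {z : ℝ}
    (hΛ : (diagonal ![Real.exp z, Real.exp (-z)]).mulVec '' Λ = Λ) :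
    vertical z ∈ Subgroup.normalizer (horizontalSubgroup Λ : Set Sol) := by
  have hconj (w : Fin 2 → ℝ) : vertical z * horizontal w * (vertical z)⁻¹ =
      horizontal (diagonal ![Real.exp z, Real.exp (-z)] *ᵥ w) := by
    rw [vertical_mul_horizontal, mul_inv_cancel_right]
  refine Subgroup.mem_normalizer_iff.mpr fun h => ⟨?_, ?_⟩
  · rintro ⟨w, hw, rfl⟩
    exact ⟨_, hΛ.subset ⟨w, hw, rfl⟩, (hconj w).symm⟩
  · rintro ⟨w, hw, hw_eq⟩
    obtain ⟨w', hw', rfl⟩ := hΛ.symm.subset hw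
    rw [← hconj, mul_left_inj, mul_right_inj] at hw_eq
    exact ⟨w', hw', hw_eq⟩

end Sol

theorem QuotientGroup.compactSpace_of_forall_mem_mul {G : Type*} [Group G] [TopologicalSpace G]
    {Γ : Subgroup G} {K : Set G} (hK : IsCompact K) (hKΓ : ∀ g, g ∈ K * (Γ : Set G)) :
    CompactSpace (G ⧸ Γ) := by
  have hcover : QuotientGroup.mk '' K = (Set.univ : Set (G ⧸ Γ)) := by
    refine Set.eq_univ_of_forall fun x => ?_
    obtain ⟨g, rfl⟩ := QuotientGroup.mk_surjective x
    obtain ⟨k, hk, γ, hγ, rfl⟩ := hKΓ g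
    exact ⟨k, hk, (QuotientGroup.mk_mul_of_mem k hγ).symm⟩
  exact ⟨hcover ▸ hK.image continuous_quotient_mk'⟩

def intLattice {m n : Type*} [Fintype n] (P : Matrix m n ℝ) : AddSubgroup (m → ℝ) :=
  (AddMonoidHom.range ((Int.castAddHom ℝ).compLeft n)).map P.mulVecLin.toAddMonoidHom

theorem mem_intLattice {m n : Type*} [Fintype n] {P : Matrix m n ℝ} {w : m → ℝ} :
    w ∈ intLattice P ↔ ∃ u : n → ℤ, P *ᵥ (Int.cast ∘ u) = w := by
  simp [intLattice]
  rfl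

theorem diagonal_mulVec_image_intLattice (A : Matrix.SpecialLinearGroup (Fin 2) ℤ)
    (P : Matrix (Fin 2) (Fin 2) ℝ) (hP : IsUnit P.det) (s : ℝ)
    (hconj : P * ((A : Matrix (Fin 2) (Fin 2) ℤ).map (Int.cast : ℤ → ℝ)) * P⁻¹ =
      Matrix.diagonal ![Real.exp s, Real.exp (-s)]) :
    (diagonal ![Real.exp s, Real.exp (-s)]).mulVec '' intLattice P = intLattice P := by
  have hA (u : Fin 2 → ℤ) : diagonal ![Real.exp s, Real.exp (-s)] *ᵥ (P *ᵥ (Int.cast ∘ u)) =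
      P *ᵥ (Int.cast ∘ ((A : Matrix (Fin 2) (Fin 2) ℤ) *ᵥ u)) := by
    rw [← hconj, mulVec_mulVec, mul_assoc, nonsing_inv_mul P hP, mul_one, ← mulVec_mulVec]
    congr 1
    ext i
    simpa using (RingHom.map_mulVec (Int.castRingHom ℝ) _ u i).symm
  ext w
  simp only [Set.mem_image, SetLike.mem_coe, mem_intLattice]
  constructor
  · rintro ⟨_, ⟨u, rfl⟩, rfl⟩
    exact ⟨_, (hA u).symm⟩
  · rintro ⟨u, rfl⟩
    refine ⟨_, ⟨((A⁻¹ : Matrix.SpecialLinearGroup (Fin 2) ℤ) : Matrix (Fin 2) (Fin 2) ℤ) *ᵥ u,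
      rfl⟩, ?_⟩
    rw [hA, mulVec_mulVec, ← Matrix.SpecialLinearGroup.coe_mul, mul_inv_cancel,
      Matrix.SpecialLinearGroup.coe_one, one_mulVec]

def latticeSubgroup (P : Matrix (Fin 2) (Fin 2) ℝ) (s : ℝ) : Subgroup Sol :=
  Sol.horizontalSubgroup (intLattice P) ⊔ Subgroup.zpowers (Sol.vertical s)

theorem solEmbed_eq_horizontal_mul_vertical_zpow (P : Matrix (Fin 2) (Fin 2) ℝ) (s : ℝ)
    (p q r : ℤ) :
    solEmbed P s p q r = Sol.horizontal (P *ᵥ (Int.cast ∘ ![p, q])) * Sol.vertical s ^ r := by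
  rw [Sol.vertical_zpow, Sol.horizontal_mul_vertical, mul_comm (r : ℝ)]
  rfl

theorem coe_latticeSubgroup (A : Matrix.SpecialLinearGroup (Fin 2) ℤ)
    (P : Matrix (Fin 2) (Fin 2) ℝ) (hP : IsUnit P.det) (s : ℝ)
    (hconj : P * ((A : Matrix (Fin 2) (Fin 2) ℤ).map (Int.cast : ℤ → ℝ)) * P⁻¹ =
      Matrix.diagonal ![Real.exp s, Real.exp (-s)]) :
    (latticeSubgroup P s : Set Sol) = {g : Sol | ∃ p q r : ℤ, g = solEmbed P s p q r} := by
  have hnorm : Subgroup.zpowers (Sol.vertical s) ≤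
      Subgroup.normalizer (Sol.horizontalSubgroup (intLattice P) : Set Sol) :=
    Subgroup.zpowers_le.mpr (Sol.vertical_mem_normalizer_horizontalSubgroup
      (diagonal_mulVec_image_intLattice A P hP s hconj))
  rw [latticeSubgroup, Subgroup.coe_mul_of_right_le_normalizer_left _ _ hnorm]
  ext g
  simp only [Set.mem_mul, SetLike.mem_coe, Subgroup.mem_zpowers_iff, Set.mem_ofPred_eq,
    solEmbed_eq_horizontal_mul_vertical_zpow]
  constructor
  · rintro ⟨_, ⟨w, hw, rfl⟩, _, ⟨r, rfl⟩, rfl⟩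
    obtain ⟨u, rfl⟩ := mem_intLattice.mp hw
    refine ⟨u 0, u 1, r, ?_⟩
    congr 4
    ext i
    fin_cases i <;> rfl
  · rintro ⟨p, q, r, rfl⟩
    exact ⟨_, ⟨_, mem_intLattice.mpr ⟨_, rfl⟩, rfl⟩, _, ⟨r, rfl⟩, rfl⟩

def solEmbedReal (P : Matrix (Fin 2) (Fin 2) ℝ) (s : ℝ) (x : ℝ × ℝ × ℝ) : Sol :=
  Sol.mk ((P *ᵥ ![x.1, x.2.1]) 0) ((P *ᵥ ![x.1, x.2.1]) 1) (s * x.2.2)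

theorem isInducing_solEmbedReal (P : Matrix (Fin 2) (Fin 2) ℝ) (hP : IsUnit P.det) (s : ℝ)
    (hs : s ≠ 0) : Topology.IsInducing (solEmbedReal P s) := by
  let coords (g : Sol) : ℝ × ℝ × ℝ :=
    ((P⁻¹ *ᵥ ![Sol.X g, Sol.Y g]) 0, (P⁻¹ *ᵥ ![Sol.X g, Sol.Y g]) 1, Sol.Z g / s)
  have hleft : coords ∘ solEmbedReal P s = id := by
    funext x
    have hXY : ![Sol.X (solEmbedReal P s x), Sol.Y (solEmbedReal P s x)] =
        P *ᵥ ![x.1, x.2.1] := by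
      ext i; fin_cases i <;> rfl
    simp only [Function.comp_apply, coords, hXY, mulVec_mulVec, nonsing_inv_mul P hP, one_mulVec]
    simp [solEmbedReal, hs]
  refine .of_comp ?_ ?_ (by rw [hleft]; exact .id)
  · exact Sol.continuous_mk (by fun_prop) (by fun_prop) (by fun_prop)
  · fun_prop

theorem isDiscrete_setOf_solEmbed (P : Matrix (Fin 2) (Fin 2) ℝ) (hP : IsUnit P.det) (s : ℝ)
    (hs : s ≠ 0) : IsDiscrete {g : Sol | ∃ p q r : ℤ, g = solEmbed P s p q r} := by
  have hcast : Topology.IsInducing ((↑) : ℤ → ℝ) := Int.isClosedEmbedding_coe_real.isInducing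
  have hrange : {g : Sol | ∃ p q r : ℤ, g = solEmbed P s p q r} =
      Set.range (solEmbedReal P s ∘ Prod.map Int.cast (Prod.map Int.cast Int.cast)) := by
    ext g
    simp [solEmbedReal, solEmbed, eq_comm]
  rw [hrange]
  exact ((isInducing_solEmbedReal P hP s hs).comp
    (hcast.prodMap (hcast.prodMap hcast))).isDiscrete_range

def solBox (P : Matrix (Fin 2) (Fin 2) ℝ) (s : ℝ) : Set Sol :=
  (fun x : ℝ × ℝ × ℝ => Sol.vertical (s * x.2.2) * Sol.horizontal (P *ᵥ ![x.1, x.2.1])) ''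
    Set.Icc 0 1

theorem isCompact_solBox (P : Matrix (Fin 2) (Fin 2) ℝ) (s : ℝ) : IsCompact (solBox P s) := by
  refine isCompact_Icc.image ?_
  simp_rw [Sol.vertical_mul_horizontal_eq_mk]
  exact Sol.continuous_mk (by fun_prop) (by fun_prop) (by fun_prop)

theorem exists_mem_solBox_mul_solEmbed (P : Matrix (Fin 2) (Fin 2) ℝ) (hP : IsUnit P.det)
    (s : ℝ) (hs : s ≠ 0) (g : Sol) :
    ∃ k ∈ solBox P s, ∃ p q r : ℤ, k * solEmbed P s p q r = g := by
  set c := Sol.Z g / s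
  set w := ![Real.exp (-(s * Int.fract c)) * Sol.X g, Real.exp (s * Int.fract c) * Sol.Y g]
  set v := P⁻¹ *ᵥ w
  have hv : P *ᵥ v = w := by rw [mulVec_mulVec, mul_nonsing_inv P hP, one_mulVec]
  have hbox : (Int.fract (v 0), Int.fract (v 1), Int.fract c) ∈ Set.Icc (0 : ℝ × ℝ × ℝ) 1 :=
    ⟨⟨Int.fract_nonneg _, Int.fract_nonneg _, Int.fract_nonneg _⟩,
      ⟨(Int.fract_lt_one _).le, (Int.fract_lt_one _).le, (Int.fract_lt_one _).le⟩⟩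
  refine ⟨_, ⟨_, hbox, rfl⟩, ⌊v 0⌋, ⌊v 1⌋, ⌊c⌋, ?_⟩
  have hfract_add_floor : ![Int.fract (v 0), Int.fract (v 1)] + Int.cast ∘ ![⌊v 0⌋, ⌊v 1⌋] = v := by
    ext i; fin_cases i <;> simp
  calc Sol.vertical (s * Int.fract c) * Sol.horizontal (P *ᵥ ![Int.fract (v 0), Int.fract (v 1)]) *
        solEmbed P s ⌊v 0⌋ ⌊v 1⌋ ⌊c⌋
      = Sol.vertical (s * Int.fract c) * Sol.horizontal (P *ᵥ v) * Sol.vertical (s * ⌊c⌋) := by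
        rw [solEmbed_eq_horizontal_mul_vertical_zpow, Sol.vertical_zpow, mul_assoc,
          ← mul_assoc (Sol.horizontal _), ← Sol.horizontal_add, ← mulVec_add, hfract_add_floor,
          mul_comm (⌊c⌋ : ℝ), ← mul_assoc]
    _ = g := by
        rw [Sol.vertical_mul_horizontal_eq_mk, Sol.mk_mul_vertical, hv, ← mul_add,
          Int.fract_add_floor, mul_div_cancel₀ _ hs]
        refine Sol.ext ?_ ?_ rfl <;> simp [w, ← mul_assoc, ← Real.exp_add]

/-- `Γ = {(P·(p,q), s·r) : p,q,r ∈ ℤ}` is a discrete cocompact subgroup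
(a lattice) of `Sol`. -/
theorem stmt4 (A : Matrix.SpecialLinearGroup (Fin 2) ℤ)
    (P : Matrix (Fin 2) (Fin 2) ℝ) (hP : IsUnit P.det) (s : ℝ) (hs : s ≠ 0)
    (hconj : P * ((A : Matrix (Fin 2) (Fin 2) ℤ).map (Int.cast : ℤ → ℝ)) * P⁻¹ =
      Matrix.diagonal ![Real.exp s, Real.exp (-s)]) :
    ∃ Γ : Subgroup Sol,
      (Γ : Set Sol) = {g : Sol | ∃ p q r : ℤ, g = solEmbed P s p q r} ∧
      DiscreteTopology Γ ∧ CompactSpace (Sol ⧸ Γ) := by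
  have hΓ := coe_latticeSubgroup A P hP s hconj
  refine ⟨latticeSubgroup P s, hΓ, ?_, ?_⟩
  · exact (hΓ ▸ isDiscrete_setOf_solEmbed P hP s hs).to_subtype
  · refine QuotientGroup.compactSpace_of_forall_mem_mul (isCompact_solBox P s) fun g => ?_
    obtain ⟨k, hk, p, q, r, rfl⟩ := exists_mem_solBox_mul_solEmbed P hP s hs g
    exact Set.mul_mem_mul hk (hΓ ▸ ⟨p, q, r, rfl⟩)
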